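/- arXiv:2511.06505 — 2 statements merged into one kernel-verified Lean document; each statement's English description precedes it below -/
import Mathlib

section
/- In the clique-interdiction flow construction: for every x ∈ X* there is a path P' ∈ 𝒫 with x_{P'} = 1 that contains both a_s and a_t. -/
open scoped BigOperators

/-- A directed multigraph: arcs `A` with tail and head maps into a vertex type `V`. -/
structure MultiDigraph (V : Type) (A : Type) where
  tail : A → V
  head : A → V

namespace MultiDigraph

variable {V A : Type}

/-- `p` is (the arc list of) a simple directed `s`-`t`-path in `D`. -/
def IsPath (D : MultiDigraph V A) (s t : V) (p : List A) : Prop :=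
  p ≠ [] ∧ List.Chain' (fun a b => D.head a = D.tail b) p ∧
    (p.map D.tail).head? = some s ∧ (p.map D.head).getLast? = some t ∧
    (p.map D.tail ++ [t]).Nodup

/-- The set of simple `s`-`t`-paths of `D`. -/
def pathSet (D : MultiDigraph V A) (s t : V) : Set (List A) := {p | D.IsPath s t p}

/-- `x` is a feasible `s`-`t` path flow with respect to capacities `u`. -/
def IsFlow (D : MultiDigraph V A) (s t : V) (u : A → ℚ) (x : List A → ℚ) : Prop :=
  (∀ p, 0 ≤ x p) ∧ (∀ p, x p ≠ 0 → D.IsPath s t p) ∧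
    ∀ a : A, (∑ᶠ p ∈ {p : List A | D.IsPath s t p ∧ a ∈ p}, x p) ≤ u a

/-- The value of a path flow. -/
noncomputable def value (D : MultiDigraph V A) (s t : V) (x : List A → ℚ) : ℚ :=
  ∑ᶠ p ∈ D.pathSet s t, x p

/-- `λ(x,S)`: the amount of flow on paths meeting `S`. -/
noncomputable def loss (D : MultiDigraph V A) (s t : V) (x : List A → ℚ) (S : Set A) : ℚ :=
  ∑ᶠ p ∈ {p : List A | D.IsPath s t p ∧ ∃ a ∈ S, a ∈ p}, x p

/-- The amount of flow surviving the failure of `S`. -/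
noncomputable def survival (D : MultiDigraph V A) (s t : V) (x : List A → ℚ) (S : Set A) : ℚ :=
  ∑ᶠ p ∈ {p : List A | D.IsPath s t p ∧ ∀ a ∈ S, a ∉ p}, x p

/-- A feasible multicommodity path flow meeting all demands exactly. -/
def IsMultiFlow {K : Type} (D : MultiDigraph V A) (u : A → ℚ)
    (src snk : K → V) (dem : K → ℚ) (x : K → List A → ℚ) : Prop :=
  (∀ i p, 0 ≤ x i p) ∧ (∀ i p, x i p ≠ 0 → D.IsPath (src i) (snk i) p) ∧
    (∀ a : A,
      (∑ᶠ i : K, ∑ᶠ p ∈ {p : List A | D.IsPath (src i) (snk i) p ∧ a ∈ p}, x i p) ≤ u a) ∧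
    (∀ i : K, (∑ᶠ p ∈ D.pathSet (src i) (snk i), x i p) = dem i)

/-- `λ(x,S)` for a multicommodity flow. -/
noncomputable def multiLoss {K : Type} (D : MultiDigraph V A)
    (src snk : K → V) (x : K → List A → ℚ) (S : Set A) : ℚ :=
  ∑ᶠ i : K, ∑ᶠ p ∈ {p : List A | D.IsPath (src i) (snk i) p ∧ ∃ a ∈ S, a ∈ p}, x i p

end MultiDigraph

/-- `S` is a legal failure scenario for compatibility graph `H` and budget `k`:
a clique of `H` of cardinality at most `k`. -/
def cliqueScenario {A : Type} (H : SimpleGraph A) (k : ℕ) (S : Set A) : Prop :=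
  S.Finite ∧ S.ncard ≤ k ∧ H.IsClique S

section CliqueInterdiction

/-- Nodes of the clique-interdiction flow construction. -/
inductive CNode (n : ℕ) : Type
  | s | s0 | s1 | t0 | t1 | t
  | v (i : Fin (n + 1))
  | y (i : Fin n) (b : Bool)
  | z (i : Fin n) (b : Bool)

/-- Arcs of the clique-interdiction flow construction (all of capacity 1);
`b = false` stands for superscript `0` and `b = true` for superscript `1`;
the bundle `A_{st}` has `k − 2 = ℓ − 1` arcs. -/
inductive CArc (n r ℓ : ℕ) : Type
  | as                          -- a_s = (s, v_1)
  | at'                         -- a_t = (v_{n+1}, t)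
  | vy (i : Fin n) (b : Bool)   -- (v_i, y_i^b)
  | yz (i : Fin n) (b : Bool)   -- a^b_{v_i} = (y_i^b, z_i^b)
  | zv (i : Fin n) (b : Bool)   -- (z_i^b, v_{i+1})
  | as0 (j : Fin r)             -- bundle A_s⁰: (s, s⁰)
  | at0 (j : Fin r)             -- bundle A_t⁰: (t⁰, t)
  | s0y (i : Fin n)             -- (s⁰, y_i⁰)
  | zt0 (i : Fin n)             -- (z_i⁰, t⁰)
  | as1 (j : Fin (n - r))       -- bundle A_s¹: (s, s¹)
  | at1 (j : Fin (n - r))       -- bundle A_t¹: (t¹, t)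
  | s1y (i : Fin n)             -- (s¹, y_i¹)
  | zt1 (i : Fin n)             -- (z_i¹, t¹)
  | ast (j : Fin (ℓ - 1))       -- bundle A_{st}: (s, t)

variable (n r ℓ : ℕ)

/-- The digraph of the clique-interdiction flow construction. -/
def cD : MultiDigraph (CNode n) (CArc n r ℓ) where
  tail a :=
    match a with
    | .as => .s
    | .at' => .v (Fin.last n)
    | .vy i _ => .v i.castSucc
    | .yz i b => .y i b
    | .zv i b => .z i b
    | .as0 _ => .s
    | .at0 _ => .t0
    | .s0y _ => .s0
    | .zt0 i => .z i false
    | .as1 _ => .s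
    | .at1 _ => .t1
    | .s1y _ => .s1
    | .zt1 i => .z i true
    | .ast _ => .s
  head a :=
    match a with
    | .as => .v 0
    | .at' => .t
    | .vy i b => .y i b
    | .yz i b => .z i b
    | .zv i _ => .v i.succ
    | .as0 _ => .s0
    | .at0 _ => .t
    | .s0y i => .y i false
    | .zt0 _ => .t0
    | .as1 _ => .s1
    | .at1 _ => .t
    | .s1y i => .y i true
    | .zt1 _ => .t1
    | .ast _ => .t

/-- The set `S̄ := A_{st} ∪ {a_s, a_t}`. -/
def inSbar : CArc n r ℓ → Prop
  | .as => True
  | .at' => True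
  | .ast _ => True
  | _ => False

/-- The compatibility graph of the clique-interdiction flow construction:
`{a_v¹, a_w¹}` for every edge `{v,w}` of `G`, `{a_s, a_v¹}` for every vertex `v`,
and all 2-element subsets of `S̄`. -/
def cH (G : SimpleGraph (Fin n)) : SimpleGraph (CArc n r ℓ) :=
  SimpleGraph.fromRel (fun x y =>
    (∃ i j : Fin n, G.Adj i j ∧ x = CArc.yz i true ∧ y = CArc.yz j true) ∨
    (∃ i : Fin n, x = CArc.as ∧ y = CArc.yz i true) ∨
    (inSbar n r ℓ x ∧ inSbar n r ℓ y))

/-- Membership in `X*`: an integral `s`-`t` path flow of value `θ = n + ℓ` (unit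
capacities) with `λ(x,S) ≤ k − 1 = ℓ` for every clique scenario `S ∈ S_{H,k}`,
`k = ℓ + 1`. -/
def memXstar (G : SimpleGraph (Fin n)) (x : List (CArc n r ℓ) → ℚ) : Prop :=
  (cD n r ℓ).IsFlow CNode.s CNode.t (fun _ => 1) x ∧
  (∀ p, ∃ zp : ℤ, x p = (zp : ℚ)) ∧
  (cD n r ℓ).value CNode.s CNode.t x = (n : ℚ) + (ℓ : ℚ) ∧
  (∀ S : Set (CArc n r ℓ), cliqueScenario (cH n r ℓ G) (ℓ + 1) S →
    (cD n r ℓ).loss CNode.s CNode.t x S ≤ (ℓ : ℚ))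

end CliqueInterdiction

/-!
The arcs leaving `s`, and likewise the arcs entering `t`, form a cut of capacity `n + ℓ` that
every simple `s`-`t` path crosses exactly once, so a flow of value `θ = n + ℓ` saturates both.
Hence each arc of `S̄` carries one unit, `ℓ + 1` units in all. As `S̄` is a clique of size `k`,
its failure destroys at most `ℓ` units, so some flow-carrying path contains two arcs of `S̄`.
An arc of `A_{st}` is a whole path by itself, so these two arcs are `a_s` and `a_t`; integrality
and the unit capacity of `a_s` make that path carry exactly one unit.
-/

open Finset

namespace MultiDigraph

variable {V A : Type} {D : MultiDigraph V A} {s t : V}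

theorem IsPath.nodup {p : List A} (hp : D.IsPath s t p) : p.Nodup :=
  (List.nodup_append.mp hp.2.2.2.2).1.of_map _

theorem IsPath.target_notMem_tails {p : List A} (hp : D.IsPath s t p) : t ∉ p.map D.tail :=
  fun ht => (List.nodup_append.mp hp.2.2.2.2).2.2 t ht t (List.mem_singleton_self t) rfl

theorem IsPath.exists_eq_cons {p : List A} (hp : D.IsPath s t p) :
    ∃ b l, p = b :: l ∧ D.tail b = s := by
  obtain ⟨hne, -, hhead, -, -⟩ := hp
  cases p with
  | nil => exact absurd rfl hne
  | cons b l => exact ⟨b, l, rfl, by simpa using hhead⟩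

theorem IsPath.eq_of_tail_eq {p : List A} (hp : D.IsPath s t p) {a b : A} (ha : a ∈ p)
    (hb : b ∈ p) (hab : D.tail a = D.tail b) : a = b :=
  List.inj_on_of_nodup_map (List.nodup_append.mp hp.2.2.2.2).1 ha hb hab

theorem IsPath.head_ne_target {l₁ l₂ : List A} {a b : A}
    (hp : D.IsPath s t (l₁ ++ a :: b :: l₂)) : D.head a ≠ t := by
  intro hat
  have hab : D.head a = D.tail b := (List.isChain_cons_cons.mp hp.2.1.right_of_append).1
  have hb : D.tail b ∈ (l₁ ++ a :: b :: l₂).map D.tail := List.mem_map_of_mem (by simp)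
  rw [← hab, hat] at hb
  exact hp.target_notMem_tails hb

theorem IsPath.getLast?_eq_of_head_eq {p : List A} (hp : D.IsPath s t p) {a : A} (ha : a ∈ p)
    (hat : D.head a = t) : p.getLast? = some a := by
  obtain ⟨l₁, l₂, rfl⟩ := List.append_of_mem ha
  rw [List.getLast?_append_cons]
  cases l₂ with
  | nil => rfl
  | cons b l₂ => exact absurd hat hp.head_ne_target

theorem IsPath.existsUnique_tail_eq {p : List A} (hp : D.IsPath s t p) :
    ∃! a, D.tail a = s ∧ a ∈ p := by
  obtain ⟨b, l, rfl, hb⟩ := hp.exists_eq_cons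
  exact ⟨b, ⟨hb, List.mem_cons_self⟩, fun a ⟨has, ha⟩ =>
    hp.eq_of_tail_eq ha List.mem_cons_self (has.trans hb.symm)⟩

theorem IsPath.existsUnique_head_eq {p : List A} (hp : D.IsPath s t p) :
    ∃! a, D.head a = t ∧ a ∈ p := by
  obtain ⟨b, hb⟩ := Option.isSome_iff_exists.mp (List.getLast?_isSome.mpr hp.1)
  have hbt : D.head b = t := by simpa [List.getLast?_map, hb] using hp.2.2.2.1
  refine ⟨b, ⟨hbt, List.mem_of_mem_getLast? hb⟩, fun a ⟨hat, ha⟩ => ?_⟩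
  simpa [hb, eq_comm] using hp.getLast?_eq_of_head_eq ha hat

theorem IsPath.eq_singleton {p : List A} (hp : D.IsPath s t p) {a : A} (ha : a ∈ p)
    (has : D.tail a = s) (hat : D.head a = t) : p = [a] := by
  obtain ⟨b, l, rfl, hb⟩ := hp.exists_eq_cons
  obtain rfl := hp.eq_of_tail_eq ha List.mem_cons_self (has.trans hb.symm)
  cases l with
  | nil => rfl
  | cons c l => exact absurd hat (IsPath.head_ne_target (l₁ := []) hp)

theorem finite_pathSet [Fintype A] (D : MultiDigraph V A) (s t : V) :
    (D.pathSet s t).Finite :=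
  (List.finite_length_le A (Fintype.card A)).subset fun _ hp => IsPath.nodup hp |>.length_le_card

noncomputable def paths [Fintype A] (D : MultiDigraph V A) (s t : V) : Finset (List A) :=
  (D.finite_pathSet s t).toFinset

theorem mem_paths [Fintype A] {p : List A} : p ∈ D.paths s t ↔ D.IsPath s t p :=
  Set.Finite.mem_toFinset _

noncomputable def arcFlow (D : MultiDigraph V A) (s t : V) (x : List A → ℚ) (a : A) : ℚ :=
  ∑ᶠ p ∈ {p : List A | D.IsPath s t p ∧ a ∈ p}, x p

variable [Fintype A] {x : List A → ℚ}

theorem finsum_mem_isPath_and (P : List A → Prop) [DecidablePred P] (f : List A → ℚ) :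
    ∑ᶠ p ∈ {p : List A | D.IsPath s t p ∧ P p}, f p = ∑ p ∈ (D.paths s t).filter P, f p := by
  rw [← finsum_mem_coe_finset]
  congr! 2
  simp [mem_paths]

theorem single_le_arcFlow (hx : ∀ p, 0 ≤ x p) {p : List A} (hp : D.IsPath s t p) {a : A}
    (ha : a ∈ p) : x p ≤ D.arcFlow s t x a := by
  classical
  rw [arcFlow, finsum_mem_isPath_and]
  exact single_le_sum (fun _ _ => hx _) (mem_filter.mpr ⟨mem_paths.mpr hp, ha⟩)

theorem sum_arcFlow_eq_sum_card_smul [DecidableEq A] (C : Finset A) :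
    ∑ a ∈ C, D.arcFlow s t x a = ∑ p ∈ D.paths s t, #{a ∈ C | a ∈ p} • x p := by
  simp only [arcFlow, finsum_mem_isPath_and, sum_filter]
  rw [sum_comm]
  refine sum_congr rfl fun p _ => ?_
  rw [← sum_filter, sum_const]

theorem sum_arcFlow_eq_value {C : Finset A} (hC : ∀ p, D.IsPath s t p → ∃! a, a ∈ C ∧ a ∈ p) :
    ∑ a ∈ C, D.arcFlow s t x a = D.value s t x := by
  classical
  have hcard : ∀ p ∈ D.paths s t, #{a ∈ C | a ∈ p} = 1 := fun p hp => by
    obtain ⟨a, ha, huniq⟩ := hC p (mem_paths.mp hp)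
    exact card_eq_one.mpr ⟨a, by ext b; simpa using ⟨fun hb => huniq b hb, fun h => h ▸ ha⟩⟩
  rw [sum_arcFlow_eq_sum_card_smul, sum_congr rfl fun p hp => by rw [hcard p hp, one_smul],
    value, pathSet, ← finsum_mem_coe_finset]
  congr! 2
  simp [mem_paths]

theorem IsFlow.arcFlow_eq_of_le_value {u : A → ℚ} (hx : D.IsFlow s t u x) {C : Finset A}
    (hC : ∀ p, D.IsPath s t p → ∃! a, a ∈ C ∧ a ∈ p) (hval : ∑ a ∈ C, u a ≤ D.value s t x) :
    ∀ a ∈ C, D.arcFlow s t x a = u a :=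
  (sum_eq_sum_iff_of_le fun a _ => hx.2.2 a).mp
    ((sum_le_sum fun a _ => hx.2.2 a).antisymm (sum_arcFlow_eq_value hC ▸ hval))

theorem exists_two_mem_of_loss_lt (hx : ∀ p, 0 ≤ x p) (S : Finset A)
    (h : D.loss s t x S < ∑ a ∈ S, D.arcFlow s t x a) :
    ∃ p, D.IsPath s t p ∧ x p ≠ 0 ∧ ∃ a ∈ S, ∃ b ∈ S, a ≠ b ∧ a ∈ p ∧ b ∈ p := by
  classical
  by_contra! hne
  refine h.not_ge ?_
  rw [sum_arcFlow_eq_sum_card_smul, loss, finsum_mem_isPath_and, sum_filter]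
  refine sum_le_sum fun p hp => ?_
  obtain hx0 | hx0 := eq_or_ne (x p) 0
  · simp [hx0]
  have hle : #{a ∈ S | a ∈ p} ≤ 1 := card_le_one.mpr fun a ha b hb => by
    by_contra hab
    exact hne p (mem_paths.mp hp) hx0 a (mem_filter.mp ha).1 b (mem_filter.mp hb).1 hab
      (mem_filter.mp ha).2 (mem_filter.mp hb).2
  obtain h0 | h1 := Nat.le_one_iff_eq_zero_or_eq_one.mp hle
  · rw [h0, zero_smul]
    split_ifs <;> simp [hx]
  · obtain ⟨a, ha⟩ := card_pos.mp (h1 ▸ Nat.one_pos)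
    rw [h1, one_smul, if_pos ⟨a, by simpa using ha⟩]

end MultiDigraph

deriving instance DecidableEq for CNode
deriving instance DecidableEq, Fintype for CArc

namespace CliqueInterdiction

open MultiDigraph

variable {n r ℓ : ℕ}

theorem card_tail_eq_s_le (hℓ : 1 ≤ ℓ) (hr : r ≤ n) :
    #{a : CArc n r ℓ | (cD n r ℓ).tail a = .s} ≤ n + ℓ := by
  have hsub : ({a | (cD n r ℓ).tail a = .s} : Finset (CArc n r ℓ)) ⊆
      {.as} ∪ univ.image CArc.as0 ∪ univ.image CArc.as1 ∪ univ.image CArc.ast := by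
    intro a ha
    rw [mem_filter] at ha
    cases a <;> simp_all [cD]
  grw [card_le_card hsub, card_union_le, card_union_le, card_union_le, card_image_le,
    card_image_le, card_image_le]
  simp only [card_singleton, card_univ, Fintype.card_fin]
  omega

theorem card_head_eq_t_le (hℓ : 1 ≤ ℓ) (hr : r ≤ n) :
    #{a : CArc n r ℓ | (cD n r ℓ).head a = .t} ≤ n + ℓ := by
  have hsub : ({a | (cD n r ℓ).head a = .t} : Finset (CArc n r ℓ)) ⊆
      {.at'} ∪ univ.image CArc.at0 ∪ univ.image CArc.at1 ∪ univ.image CArc.ast := by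
    intro a ha
    rw [mem_filter] at ha
    cases a <;> simp_all [cD]
  grw [card_le_card hsub, card_union_le, card_union_le, card_union_le, card_image_le,
    card_image_le, card_image_le]
  simp only [card_singleton, card_univ, Fintype.card_fin]
  omega

def sBar : Finset (CArc n r ℓ) :=
  insert .as (insert .at' (univ.image CArc.ast))

theorem mem_sBar {a : CArc n r ℓ} : a ∈ sBar ↔ inSbar n r ℓ a := by
  cases a <;> simp [sBar, inSbar]

theorem card_sBar (hℓ : 1 ≤ ℓ) : #(sBar : Finset (CArc n r ℓ)) = ℓ + 1 := by
  rw [sBar, card_insert_of_notMem (by simp), card_insert_of_notMem (by simp),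
    card_image_of_injective _ fun _ _ h => by injection h,
    card_univ, Fintype.card_fin]
  omega

theorem cliqueScenario_sBar (hℓ : 1 ≤ ℓ) (G : SimpleGraph (Fin n)) :
    cliqueScenario (cH n r ℓ G) (ℓ + 1) ↑(sBar : Finset (CArc n r ℓ)) := by
  refine ⟨finite_toSet _, by rw [Set.ncard_coe_finset, card_sBar hℓ], ?_⟩
  intro a ha b hb hab
  rw [cH, SimpleGraph.fromRel_adj]
  exact ⟨hab, .inl (.inr (.inr ⟨mem_sBar.mp ha, mem_sBar.mp hb⟩))⟩

theorem as_mem_and_at_mem_of_two_mem_sBar {p : List (CArc n r ℓ)}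
    (hp : (cD n r ℓ).IsPath .s .t p) {a b : CArc n r ℓ} (ha : a ∈ sBar) (hb : b ∈ sBar)
    (hab : a ≠ b) (hap : a ∈ p) (hbp : b ∈ p) : CArc.as ∈ p ∧ CArc.at' ∈ p := by
  by_cases hast : ∃ j, CArc.ast j ∈ p
  · obtain ⟨j, hj⟩ := hast
    rw [hp.eq_singleton hj rfl rfl, List.mem_singleton] at hap hbp
    exact absurd (hap.trans hbp.symm) hab
  have hends : ∀ c ∈ sBar, c ∈ p → c = .as ∨ c = .at' := by
    intro c hc hcp
    simp only [sBar, mem_insert, mem_image, mem_univ, true_and] at hc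
    rcases hc with rfl | rfl | ⟨j, rfl⟩
    exacts [.inl rfl, .inr rfl, absurd ⟨j, hcp⟩ hast]
  rcases hends a ha hap with rfl | rfl <;> rcases hends b hb hbp with rfl | rfl
  exacts [absurd rfl hab, ⟨hap, hbp⟩, ⟨hbp, hap⟩, absurd rfl hab]

variable {G : SimpleGraph (Fin n)} {x : List (CArc n r ℓ) → ℚ}

theorem arcFlow_eq_one_of_tail_eq_s (hℓ : 1 ≤ ℓ) (hr : r ≤ n) (hx : memXstar n r ℓ G x)
    {a : CArc n r ℓ} (ha : (cD n r ℓ).tail a = .s) : (cD n r ℓ).arcFlow .s .t x a = 1 := by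
  refine hx.1.arcFlow_eq_of_le_value (C := {a | (cD n r ℓ).tail a = .s}) ?_ ?_ a (by simpa)
  · intro p hp
    simpa using hp.existsUnique_tail_eq
  · rw [hx.2.2.1, sum_const, nsmul_one]
    exact_mod_cast card_tail_eq_s_le hℓ hr

theorem arcFlow_eq_one_of_head_eq_t (hℓ : 1 ≤ ℓ) (hr : r ≤ n) (hx : memXstar n r ℓ G x)
    {a : CArc n r ℓ} (ha : (cD n r ℓ).head a = .t) : (cD n r ℓ).arcFlow .s .t x a = 1 := by
  refine hx.1.arcFlow_eq_of_le_value (C := {a | (cD n r ℓ).head a = .t}) ?_ ?_ a (by simpa)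
  · intro p hp
    simpa using hp.existsUnique_head_eq
  · rw [hx.2.2.1, sum_const, nsmul_one]
    exact_mod_cast card_head_eq_t_le hℓ hr

theorem arcFlow_eq_one_of_mem_sBar (hℓ : 1 ≤ ℓ) (hr : r ≤ n) (hx : memXstar n r ℓ G x)
    {a : CArc n r ℓ} (ha : a ∈ sBar) : (cD n r ℓ).arcFlow .s .t x a = 1 := by
  simp only [sBar, mem_insert, mem_image, mem_univ, true_and] at ha
  rcases ha with rfl | rfl | ⟨j, rfl⟩
  · exact arcFlow_eq_one_of_tail_eq_s hℓ hr hx rfl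
  · exact arcFlow_eq_one_of_head_eq_t hℓ hr hx rfl
  · exact arcFlow_eq_one_of_tail_eq_s hℓ hr hx rfl

end CliqueInterdiction

theorem Rat.eq_one_of_intCast {q : ℚ} (hq : ∃ z : ℤ, q = z) (hpos : 0 < q) (hle : q ≤ 1) :
    q = 1 := by
  obtain ⟨z, rfl⟩ := hq
  have : z = 1 := by
    have := Int.cast_pos.mp hpos
    have : z ≤ 1 := by exact_mod_cast hle
    omega
  simp [this]

open CliqueInterdiction MultiDigraph in
/-- In the clique-interdiction flow construction: every `x ∈ X*`
has a flow-carrying path `P'` (with `x_{P'} = 1`) containing both `a_s` and `a_t`. -/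
theorem cliqueInterdiction_path_through_as_at
    (n r ℓ : ℕ) (hℓ : 1 ≤ ℓ) (hr : r ≤ n) (G : SimpleGraph (Fin n))
    (x : List (CArc n r ℓ) → ℚ) (hx : memXstar n r ℓ G x) :
    ∃ P' : List (CArc n r ℓ), (cD n r ℓ).IsPath CNode.s CNode.t P' ∧
      x P' = 1 ∧ CArc.as ∈ P' ∧ CArc.at' ∈ P' := by
  have hnonneg := hx.1.1
  have hcarried : ∑ a ∈ sBar, (cD n r ℓ).arcFlow .s .t x a = ℓ + 1 := by
    rw [sum_congr rfl fun a ha => arcFlow_eq_one_of_mem_sBar hℓ hr hx ha, sum_const,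
      card_sBar hℓ, nsmul_one]
    push_cast; rfl
  have hlost := hx.2.2.2 _ (cliqueScenario_sBar hℓ G)
  obtain ⟨p, hp, hxp, a, ha, b, hb, hab, hap, hbp⟩ :=
    exists_two_mem_of_loss_lt hnonneg sBar (by linarith)
  obtain ⟨has, hat⟩ := as_mem_and_at_mem_of_two_mem_sBar hp ha hb hab hap hbp
  refine ⟨p, hp, Rat.eq_one_of_intCast (hx.2.1 p) ((hnonneg p).lt_of_ne' hxp) ?_, has, hat⟩
  calc x p ≤ (cD n r ℓ).arcFlow .s .t x .as := single_le_arcFlow hnonneg hp has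
    _ = 1 := arcFlow_eq_one_of_tail_eq_s hℓ hr hx rfl
end

section
/- In the clique-interdiction flow construction: for every x ∈ X* and every path P' with x_{P'} = 1 and a_s, a_t ∈ P', the set R := {v ∈ V : a_v¹ ∈ P'} satisfies |R| = r and R ∩ C ≠ ∅ for every clique C ∈ 𝒞_ℓ(G). -/
open scoped BigOperators

/-!
In an integral flow with unit capacities every flow-carrying path carries exactly one unit and no
two of them share an arc. Since `θ = n + ℓ` is the number of arcs leaving `s`, each of these arcs
lies on a flow-carrying path. The path `P'` through `a_s` and `a_t` runs along `v_1, …, v_{n+1}`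
and uses `a_v⁰` or `a_v¹` for every `v`. Each of the `r` paths through `A_s⁰` uses some `a_v⁰`,
different paths using different `v`, and `P'` must then use `a_v¹`: hence `|R| ≥ r`. Likewise the
`n − r` paths through `A_s¹` use arcs `a_v¹` with `v ∉ R`, so `|R| = r` and every `v ∉ R` is
covered by one of them. A clique `C` of size `ℓ` missing `R` would make `P'` and the `ℓ` paths
covering `C` meet the clique `{a_s} ∪ {a_v¹ : v ∈ C}` of `H`, a loss of `ℓ + 1 > k − 1`.
-/

open Function Set

theorem Finset.sum_le_finsum_mem {α M : Type*} [AddCommMonoid M] [Preorder M] [AddLeftMono M]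
    {f : α → M} {W : Set α} (hW : W.Finite) (hf : ∀ a ∈ W, 0 ≤ f a) {Q : Finset α}
    (hQ : ↑Q ⊆ W) : ∑ a ∈ Q, f a ≤ ∑ᶠ a ∈ W, f a := by
  rw [finsum_mem_eq_finite_toFinset_sum f hW]
  exact Finset.sum_le_sum_of_subset_of_nonneg (by simpa using hQ)
    fun a ha _ => hf a (by simpa using ha)

theorem Set.ncard_eq_and_compl_subset_range {α β γ : Type*} [Finite α] [Finite β] [Finite γ]
    {R : Set α} {f : β → α} {g : γ → α} (hf : Injective f) (hg : Injective g)
    (hfR : ∀ b, f b ∈ R) (hgR : ∀ c, g c ∉ R) (hcard : Nat.card β + Nat.card γ = Nat.card α) :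
    R.ncard = Nat.card β ∧ Rᶜ ⊆ range g := by
  have hβ : Nat.card β ≤ R.ncard :=
    ncard_range_of_injective hf ▸ ncard_le_ncard (range_subset_iff.mpr hfR)
  have hgRc : range g ⊆ Rᶜ := range_subset_iff.mpr hgR
  have hγ : Nat.card γ ≤ Rᶜ.ncard := ncard_range_of_injective hg ▸ ncard_le_ncard hgRc
  have hR := ncard_add_ncard_compl R
  refine ⟨by omega, (eq_of_subset_of_ncard_le hgRc ?_).ge⟩
  rw [ncard_range_of_injective hg]
  omega

namespace MultiDigraph

variable {V A : Type} {D : MultiDigraph V A} {s t : V} {p q : List A} {a b : A}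

namespace IsPath

theorem nodup_map_tail (h : D.IsPath s t p) : (p.map D.tail).Nodup :=
  (List.nodup_append.mp h.2.2.2.2).1

theorem nodup_s16 (h : D.IsPath s t p) : p.Nodup :=
  h.nodup_map_tail.of_map _

theorem eq_of_tail_eq_s16 (h : D.IsPath s t p) (ha : a ∈ p) (hb : b ∈ p)
    (hab : D.tail a = D.tail b) : a = b :=
  List.inj_on_of_nodup_map h.nodup_map_tail ha hb hab

theorem tail_ne_target (h : D.IsPath s t p) (ha : a ∈ p) : D.tail a ≠ t :=
  fun hat => (List.nodup_append.mp h.2.2.2.2).2.2 _ (List.mem_map_of_mem ha) t (by simp) hat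

theorem exists_tail_eq_source (h : D.IsPath s t p) : ∃ a ∈ p, D.tail a = s := by
  obtain ⟨c, l, rfl⟩ := List.exists_cons_of_ne_nil h.1
  exact ⟨c, List.mem_cons_self, by simpa using h.2.2.1⟩

theorem head_getLast (h : D.IsPath s t p) : D.head (p.getLast h.1) = t := by
  simpa [List.getLast?_eq_some_getLast h.1] using h.2.2.2.1

theorem eq_getLast_or_exists_next (h : D.IsPath s t p) (ha : a ∈ p) :
    a = p.getLast h.1 ∨ ∃ b ∈ p, D.tail b = D.head a := by
  obtain ⟨i, hi, rfl⟩ := List.mem_iff_getElem.mp ha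
  by_cases hlt : i + 1 < p.length
  · exact .inr ⟨p[i + 1], List.getElem_mem _, (List.isChain_iff_getElem.mp h.2.1 i hlt).symm⟩
  · left
    rw [List.getLast_eq_getElem]
    congr
    omega

theorem exists_next (h : D.IsPath s t p) (ha : a ∈ p) (hat : D.head a ≠ t) :
    ∃ b ∈ p, D.tail b = D.head a :=
  (h.eq_getLast_or_exists_next ha).resolve_left fun hl => hat (hl ▸ h.head_getLast)

theorem eq_of_head_eq_target (h : D.IsPath s t p) (ha : a ∈ p) (hb : b ∈ p)
    (hat : D.head a = t) (hbt : D.head b = t) : a = b := by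
  have last : ∀ c ∈ p, D.head c = t → c = p.getLast h.1 := fun c hc hct =>
    (h.eq_getLast_or_exists_next hc).resolve_right fun ⟨d, hd, hdc⟩ =>
      h.tail_ne_target hd (hdc.trans hct)
  rw [last a ha hat, last b hb hbt]

end IsPath

theorem pathSet_finite [Finite A] : (D.pathSet s t).Finite := by
  have := Fintype.ofFinite A
  exact (List.finite_length_le A (Fintype.card A)).subset fun p hp => hp.nodup_s16.length_le_card

variable {x : List A → ℚ}

namespace IsFlow

theorem support_subset {u : A → ℚ} (hx : D.IsFlow s t u x) : support x ⊆ D.pathSet s t :=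
  hx.2.1

variable [Finite A]

theorem sum_le_one (hx : D.IsFlow s t (fun _ => 1) x) {Q : Finset (List A)}
    (hQ : ∀ p ∈ Q, D.IsPath s t p ∧ a ∈ p) : ∑ p ∈ Q, x p ≤ 1 :=
  (Finset.sum_le_finsum_mem (pathSet_finite.subset fun _ hp => hp.1) (fun p _ => hx.1 p)
    hQ).trans (hx.2.2 a)

theorem eq_one_of_ne_zero (hx : D.IsFlow s t (fun _ => 1) x) (hint : ∀ p, ∃ z : ℤ, x p = z)
    (hp : x p ≠ 0) : x p = 1 := by
  obtain ⟨a, ha, -⟩ := (hx.2.1 p hp).exists_tail_eq_source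
  have hle : x p ≤ 1 := by
    simpa using hx.sum_le_one (Q := {p}) (by simpa using ⟨hx.2.1 p hp, ha⟩)
  obtain ⟨z, hz⟩ := hint p
  have h0 := hx.1 p
  rw [hz] at hle h0 hp ⊢
  norm_cast at *
  omega

theorem eq_of_mem_of_mem (hx : D.IsFlow s t (fun _ => 1) x) (hint : ∀ p, ∃ z : ℤ, x p = z)
    (hp : x p ≠ 0) (hq : x q ≠ 0) (hap : a ∈ p) (haq : a ∈ q) : p = q := by
  classical
  by_contra hpq
  have := hx.sum_le_one (Q := {p, q}) (by simpa using ⟨⟨hx.2.1 p hp, hap⟩, hx.2.1 q hq, haq⟩)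
  rw [Finset.sum_pair hpq, hx.eq_one_of_ne_zero hint hp, hx.eq_one_of_ne_zero hint hq] at this
  norm_num at this

theorem value_eq_ncard_support (hx : D.IsFlow s t (fun _ => 1) x)
    (hint : ∀ p, ∃ z : ℤ, x p = z) : D.value s t x = (support x).ncard := by
  have hF : (support x).Finite := pathSet_finite.subset hx.support_subset
  rw [value, ← finsum_mem_inter_support, inter_eq_right.mpr hx.support_subset,
    finsum_mem_eq_finite_toFinset_sum _ hF, ncard_eq_toFinset_card _ hF,
    Finset.sum_congr rfl fun p hp => hx.eq_one_of_ne_zero hint (by simpa using hp)]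
  simp

theorem injective_of_mem (hx : D.IsFlow s t (fun _ => 1) x) (hint : ∀ p, ∃ z : ℤ, x p = z)
    {ι : Type} {q : ι → List A} (hq : Injective q) (hqx : ∀ i, x (q i) ≠ 0) {e : ι → A}
    (he : ∀ i, e i ∈ q i) : Injective e := fun i j hij =>
  hq (hx.eq_of_mem_of_mem hint (hqx i) (hqx j) (he i) (hij ▸ he j))

theorem exists_flowPaths_of_value_eq_card (hx : D.IsFlow s t (fun _ => 1) x)
    (hint : ∀ p, ∃ z : ℤ, x p = z) {ι : Type} [Fintype ι] {e : ι → A} (he : Injective e)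
    (hs : range e = {a | D.tail a = s}) (hval : D.value s t x = Fintype.card ι) :
    ∃ q : ι → List A, Injective q ∧ ∀ i, x (q i) ≠ 0 ∧ e i ∈ q i := by
  have hF : (support x).Finite := pathSet_finite.subset hx.support_subset
  have first (p) (hp : p ∈ hF.toFinset) : ∃ k, e k ∈ p := by
    obtain ⟨a, ha, has⟩ := (hx.2.1 p (by simpa using hp)).exists_tail_eq_source
    obtain ⟨k, rfl⟩ : a ∈ range e := hs ▸ has
    exact ⟨k, ha⟩
  choose k hk using first
  have hcard : Fintype.card ι = hF.toFinset.card := by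
    rw [← ncard_eq_toFinset_card _ hF]
    exact_mod_cast hval.symm.trans (hx.value_eq_ncard_support hint)
  have onto := Finset.surj_on_of_inj_on_of_card_le k (fun _ _ => Finset.mem_univ _)
    (fun p p' hp hp' hpp' => hx.eq_of_mem_of_mem hint (by simpa using hp) (by simpa using hp')
      (hk p hp) (hpp' ▸ hk p' hp')) (by simp [hcard])
  choose q hqF hq using fun i => onto i (Finset.mem_univ i)
  have hqx (i) : x (q i) ≠ 0 := by simpa using hqF i
  have hqe (i) : e i ∈ q i := by
    convert hk _ (hqF i)
    exact hq i
  have hes (i) : D.tail (e i) = s := (hs ▸ mem_range_self i :)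
  refine ⟨q, fun i j hij => he ?_, fun i => ⟨hqx i, hqe i⟩⟩
  exact (hx.2.1 _ (hqx j)).eq_of_tail_eq_s16 (hij ▸ hqe i) (hqe j) ((hes i).trans (hes j).symm)

theorem natCast_card_le_loss (hx : D.IsFlow s t (fun _ => 1) x) (hint : ∀ p, ∃ z : ℤ, x p = z)
    {S : Set A} {Q : Finset (List A)} (hQ : ∀ p ∈ Q, x p ≠ 0 ∧ ∃ a ∈ S, a ∈ p) :
    (Q.card : ℚ) ≤ D.loss s t x S := calc
  (Q.card : ℚ) = ∑ p ∈ Q, x p := by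
    rw [Finset.sum_congr rfl fun p hp => hx.eq_one_of_ne_zero hint (hQ p hp).1]
    simp
  _ ≤ D.loss s t x S :=
    Finset.sum_le_finsum_mem (pathSet_finite.subset fun _ hp => hp.1) (fun p _ => hx.1 p)
      fun p hp => ⟨hx.2.1 p (hQ p hp).1, (hQ p hp).2⟩

end IsFlow

end MultiDigraph

section CliqueInterdiction

open MultiDigraph

variable {n r ℓ : ℕ}

instance : Finite (CArc n r ℓ) := by
  have h : (univ : Set (CArc n r ℓ)) = {.as, .at'} ∪ range (uncurry .vy) ∪ range (uncurry .yz)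
      ∪ range (uncurry .zv) ∪ range .as0 ∪ range .at0 ∪ range .s0y ∪ range .zt0 ∪ range .as1
      ∪ range .at1 ∪ range .s1y ∪ range .zt1 ∪ range .ast := by
    ext a
    cases a <;> simp
  exact finite_univ_iff.mp (h ▸ toFinite _)

def sourceArc (n r ℓ : ℕ) : Unit ⊕ Fin r ⊕ Fin (n - r) ⊕ Fin (ℓ - 1) → CArc n r ℓ :=
  Sum.elim (fun _ => .as) (Sum.elim .as0 (Sum.elim .as1 .ast))

theorem sourceArc_injective : Injective (sourceArc n r ℓ) := by
  rintro (a | a | a | a) (b | b | b | b) h <;> simp_all [sourceArc]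

theorem range_sourceArc : range (sourceArc n r ℓ) = {a | (cD n r ℓ).tail a = .s} := by
  ext a
  cases a <;> simp [sourceArc, cD]

variable {P : List (CArc n r ℓ)}

theorem eq_zv_of_tail_eq_z (hP : (cD n r ℓ).IsPath .s .t P) (hat : .at' ∈ P) {f : CArc n r ℓ}
    (hf : f ∈ P) {i : Fin n} {b : Bool} (hft : (cD n r ℓ).tail f = .z i b) : f = .zv i b := by
  cases f <;> simp [cD] at hft ⊢
  · exact hft
  all_goals
    obtain ⟨g, hg, hgt⟩ := hP.exists_next hf (by simp [cD])
    cases g <;> simp [cD] at hgt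
    exact absurd (hP.eq_of_head_eq_target hg hat rfl rfl) (by simp)

theorem exists_yz_zv_mem (hP : (cD n r ℓ).IsPath .s .t P) (hat : .at' ∈ P) {c : CArc n r ℓ}
    (hc : c ∈ P) {i : Fin n} (hci : (cD n r ℓ).head c = .v i.castSucc) :
    ∃ b, .yz i b ∈ P ∧ .zv i b ∈ P := by
  obtain ⟨d, hd, hdt⟩ := hP.exists_next hc (by simp [hci])
  rw [hci] at hdt
  cases d with
  | at' => exact absurd (by simpa [cD] using hdt) (Fin.castSucc_lt_last i).ne'
  | vy i b =>
    obtain rfl : i = _ := by simpa [cD] using hdt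
    obtain ⟨e, he, het⟩ := hP.exists_next hd (by simp [cD])
    obtain rfl : e = .yz i b := by cases e <;> simp_all [cD]
    obtain ⟨f, hf, hft⟩ := hP.exists_next he (by simp [cD])
    exact ⟨b, he, eq_zv_of_tail_eq_z hP hat hf hft ▸ hf⟩
  | _ => simp [cD] at hdt

theorem exists_yz_mem (hP : (cD n r ℓ).IsPath .s .t P) (has : .as ∈ P) (hat : .at' ∈ P)
    (i : Fin n) : ∃ b, .yz i b ∈ P := by
  have reach : ∀ k : Fin (n + 1), ∃ c ∈ P, (cD n r ℓ).head c = .v k :=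
    Fin.induction ⟨.as, has, rfl⟩ fun i ⟨c, hc, hci⟩ =>
      have ⟨b, _, hzv⟩ := exists_yz_zv_mem hP hat hc hci
      ⟨.zv i b, hzv, rfl⟩
  obtain ⟨c, hc, hci⟩ := reach i.castSucc
  obtain ⟨b, hyz, -⟩ := exists_yz_zv_mem hP hat hc hci
  exact ⟨b, hyz⟩

theorem exists_yz_false_mem_of_as0_mem (hP : (cD n r ℓ).IsPath .s .t P) {j : Fin r}
    (hj : .as0 j ∈ P) : ∃ i, .yz i false ∈ P := by
  obtain ⟨d, hd, hdt⟩ := hP.exists_next hj (by simp [cD])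
  cases d <;> simp [cD] at hdt
  rename_i i
  obtain ⟨e, he, het⟩ := hP.exists_next hd (by simp [cD])
  obtain rfl : e = .yz i false := by cases e <;> simp_all [cD]
  exact ⟨i, he⟩

theorem exists_yz_true_mem_of_as1_mem (hP : (cD n r ℓ).IsPath .s .t P) {j : Fin (n - r)}
    (hj : .as1 j ∈ P) : ∃ i, .yz i true ∈ P := by
  obtain ⟨d, hd, hdt⟩ := hP.exists_next hj (by simp [cD])
  cases d <;> simp [cD] at hdt
  rename_i i
  obtain ⟨e, he, het⟩ := hP.exists_next hd (by simp [cD])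
  obtain rfl : e = .yz i true := by cases e <;> simp_all [cD]
  exact ⟨i, he⟩

variable {G : SimpleGraph (Fin n)}

theorem cliqueScenario_insert_as_image_yz {C : Finset (Fin n)}
    (hC : G.IsClique (C : Set (Fin n))) (hCcard : C.card ≤ ℓ) :
    cliqueScenario (cH n r ℓ G) (ℓ + 1) (insert .as ((fun v => CArc.yz v true) '' C)) := by
  refine ⟨toFinite _, (ncard_insert_le _ _).trans ?_, SimpleGraph.isClique_insert.mpr ⟨?_, ?_⟩⟩
  · have := ncard_image_le (f := fun v => (CArc.yz v true : CArc n r ℓ)) C.finite_toSet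
    rw [ncard_coe_finset] at this
    omega
  · rintro _ ⟨v, hv, rfl⟩ _ ⟨w, hw, rfl⟩ hvw
    have hvw' : v ≠ w := fun h => hvw (h ▸ rfl)
    simp [cH, hC hv hw hvw', hvw']
  · rintro _ ⟨v, -, rfl⟩ -
    simp [cH]

variable {x : List (CArc n r ℓ) → ℚ}

namespace memXstar

theorem exists_flowPaths_sourceArc (hℓ : 1 ≤ ℓ) (hr : r ≤ n) (hx : memXstar n r ℓ G x) :
    ∃ q : _ → List (CArc n r ℓ), Injective q ∧ ∀ k, x (q k) ≠ 0 ∧ sourceArc n r ℓ k ∈ q k :=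
  hx.1.exists_flowPaths_of_value_eq_card hx.2.1 sourceArc_injective range_sourceArc <| by
    rw [hx.2.2.1]
    simp [Nat.cast_sub hr, Nat.cast_sub hℓ]
    ring

theorem exists_injective_yz_true_mem (hℓ : 1 ≤ ℓ) (hr : r ≤ n) (hx : memXstar n r ℓ G x)
    (hP : (cD n r ℓ).IsPath .s .t P) (hPx : x P ≠ 0) (has : .as ∈ P) (hat : .at' ∈ P) :
    ∃ φ : Fin r → Fin n, Injective φ ∧ ∀ j, .yz (φ j) true ∈ P := by
  obtain ⟨q, hq, hqx⟩ := hx.exists_flowPaths_sourceArc hℓ hr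
  have hq0 (j : Fin r) : x (q (.inr (.inl j))) ≠ 0 ∧ .as0 j ∈ q (.inr (.inl j)) := hqx _
  choose φ hφ using fun j => exists_yz_false_mem_of_as0_mem (hx.1.2.1 _ (hq0 j).1) (hq0 j).2
  refine ⟨φ, (hx.1.injective_of_mem hx.2.1 (hq.comp (Sum.inr_injective.comp Sum.inl_injective))
    (fun j => (hq0 j).1) hφ).of_comp (f := fun i => CArc.yz i false), fun j => ?_⟩
  obtain ⟨_ | _, hb⟩ := exists_yz_mem hP has hat (φ j)
  · have hqP := hx.1.eq_of_mem_of_mem hx.2.1 (hq0 j).1 hPx (hφ j) hb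
    rw [← hqP] at has
    exact absurd ((hx.1.2.1 _ (hq0 j).1).eq_of_tail_eq_s16 (hq0 j).2 has rfl) (by simp)
  · exact hb

theorem exists_injective_flowPaths_yz_true (hℓ : 1 ≤ ℓ) (hr : r ≤ n)
    (hx : memXstar n r ℓ G x) (hPx : x P ≠ 0) (has : .as ∈ P) :
    ∃ (φ : Fin (n - r) → Fin n) (q : Fin (n - r) → List (CArc n r ℓ)), Injective φ ∧
      Injective q ∧ ∀ j, x (q j) ≠ 0 ∧ .yz (φ j) true ∈ q j ∧ .yz (φ j) true ∉ P := by
  obtain ⟨q, hq, hqx⟩ := hx.exists_flowPaths_sourceArc hℓ hr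
  have hq1 (j : Fin (n - r)) :
      x (q (.inr (.inr (.inl j)))) ≠ 0 ∧ .as1 j ∈ q (.inr (.inr (.inl j))) := hqx _
  have hq1inj : Injective fun j : Fin (n - r) => q (.inr (.inr (.inl j))) :=
    hq.comp (Sum.inr_injective.comp (Sum.inr_injective.comp Sum.inl_injective))
  choose φ hφ using fun j => exists_yz_true_mem_of_as1_mem (hx.1.2.1 _ (hq1 j).1) (hq1 j).2
  refine ⟨φ, _, (hx.1.injective_of_mem hx.2.1 hq1inj (fun j => (hq1 j).1) hφ).of_comp
    (f := fun i => CArc.yz i true), hq1inj, fun j => ⟨(hq1 j).1, hφ j, fun hφP => ?_⟩⟩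
  have hqP := hx.1.eq_of_mem_of_mem hx.2.1 (hq1 j).1 hPx (hφ j) hφP
  rw [← hqP] at has
  exact absurd ((hx.1.2.1 _ (hq1 j).1).eq_of_tail_eq_s16 (hq1 j).2 has rfl) (by simp)

theorem exists_yz_true_mem_of_isClique (hx : memXstar n r ℓ G x) (hPx : x P ≠ 0)
    (has : .as ∈ P) {ι : Type} {φ : ι → Fin n} {q : ι → List (CArc n r ℓ)} (hφ : Injective φ)
    (hq : Injective q) (hφq : ∀ i, x (q i) ≠ 0 ∧ .yz (φ i) true ∈ q i)
    (hcover : {v | .yz v true ∈ P}ᶜ ⊆ range φ) {C : Finset (Fin n)}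
    (hC : G.IsClique (C : Set (Fin n))) (hCcard : C.card = ℓ) : ∃ v ∈ C, .yz v true ∈ P := by
  classical
  by_contra! hCP
  let I := C.preimage φ hφ.injOn
  have hIcard : I.card = ℓ := by
    rw [Finset.card_preimage, Finset.filter_true_of_mem fun v hv => hcover (hCP v hv), hCcard]
  have hPI : P ∉ I.image q := by
    intro hP
    obtain ⟨i, hi, rfl⟩ := Finset.mem_image.mp hP
    exact hCP _ (Finset.mem_preimage.mp hi) (hφq i).2
  have hloss := hx.1.natCast_card_le_loss hx.2.1 (Q := insert P (I.image q))
    (S := insert .as ((fun v => CArc.yz v true) '' C)) (by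
      simp only [Finset.mem_insert, Finset.mem_image, forall_eq_or_imp]
      refine ⟨⟨hPx, .as, mem_insert _ _, has⟩, ?_⟩
      rintro _ ⟨i, hi, rfl⟩
      exact ⟨(hφq i).1, _, mem_insert_of_mem _ ⟨φ i, Finset.mem_preimage.mp hi, rfl⟩, (hφq i).2⟩)
  rw [Finset.card_insert_of_notMem hPI, Finset.card_image_of_injective _ hq, hIcard] at hloss
  have := hx.2.2.2 _ (cliqueScenario_insert_as_image_yz hC hCcard.le)
  push_cast at hloss
  linarith

end memXstar

end CliqueInterdiction

/-- In the clique-interdiction flow construction: for every `x ∈ X*`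
and every flow-carrying path `P'` containing `a_s` and `a_t`, the vertex set
`R := {v : a_v¹ ∈ P'}` has cardinality `r` and intersects every clique of `G` of
size `ℓ`. -/
theorem cliqueInterdiction_interdicting_set
    (n r ℓ : ℕ) (hℓ : 1 ≤ ℓ) (hr : r ≤ n) (G : SimpleGraph (Fin n))
    (x : List (CArc n r ℓ) → ℚ) (hx : memXstar n r ℓ G x)
    (P' : List (CArc n r ℓ)) (hP'path : (cD n r ℓ).IsPath CNode.s CNode.t P')
    (hP'flow : x P' = 1) (hPas : CArc.as ∈ P') (hPat : CArc.at' ∈ P') :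
    {v : Fin n | CArc.yz v true ∈ P'}.ncard = r ∧
    ∀ C : Finset (Fin n), G.IsClique (C : Set (Fin n)) → C.card = ℓ →
      ∃ v ∈ C, CArc.yz v true ∈ P' := by
  have hP'x : x P' ≠ 0 := by simp [hP'flow]
  obtain ⟨φ0, hφ0, hφ0P'⟩ := hx.exists_injective_yz_true_mem hℓ hr hP'path hP'x hPas hPat
  obtain ⟨φ1, q, hφ1, hq, hφ1q⟩ := hx.exists_injective_flowPaths_yz_true hℓ hr hP'x hPas
  obtain ⟨hR, hRc⟩ := ncard_eq_and_compl_subset_range (R := {v | CArc.yz v true ∈ P'})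
    hφ0 hφ1 hφ0P' (fun j => (hφ1q j).2.2) (by simp [hr])
  refine ⟨by simpa using hR, fun C hC hCcard => ?_⟩
  exact hx.exists_yz_true_mem_of_isClique hP'x hPas hφ1 hq (fun j => (hφ1q j).imp_right And.left)
    hRc hC hCcard
end
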